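/- Let a_0 ≤ a_1 ≤ ⋯ ≤ a_n be real numbers with a_0 < a_n, let c_{a_0}, …, c_{a_n} > 0, l > 0, and weights ω_{a_0}, …, ω_{a_n} > 0, and let 𝒯_{a_i}(t) = ω_{a_i} β_{a_i}(t) / Σ_{j=0}^{n} ω_{a_j} β_{a_j}(t) be the rational GT-Bernstein basis functions. Let a_0 < t_0 < t_1 < ⋯ < t_n < a_n be an increasing sequence, set x_i = (t_i − a_0)/(a_n − t_i) and k_i = a_i − a_0, and let C = [𝒯_{a_j}(t_i)]_{i,j=0}^{n} be the collocation matrix and A = [x_i^{l·k_j}]_{i,j=0}^{n}. Then C is a totally positive matrix if and only if A is a totally positive matrix. -/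

import Mathlib

/-!
On the open interval `(a 0, a n)` one can factor
`β_{a_j}(t) = c_j (l(a_n − t))^{l(a_n − a_0)} x(t)^{l(a_j − a_0)}` with
`x(t) = (t − a_0)/(a_n − t)`, so the collocation matrix of the rational basis is
`D A E` with `D`, `E` positive diagonal matrices. Every minor of `D A E` is the
corresponding minor of `A` times a positive number.
-/

/-- A real matrix is totally positive if every minor (determinant of the submatrix
obtained by selecting rows `r 0 < r 1 < ⋯` and columns `c 0 < c 1 < ⋯`) is
nonnegative. -/
def IsTotallyPositive {N M : ℕ} (A : Matrix (Fin N) (Fin M) ℝ) : Prop :=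
  ∀ (k : ℕ) (r : Fin k → Fin N) (c : Fin k → Fin M),
    StrictMono r → StrictMono c → 0 ≤ (A.submatrix r c).det

/-- The GT-Bernstein basis functions
`β_{a_i}(t) = c_{a_i} (l(t − a_0))^{l(a_i − a_0)} (l(a_n − t))^{l(a_n − a_i)}`,
where powers are real powers (`Real.rpow`, which satisfies `0 ^ 0 = 1`). -/
noncomputable def gtBernstein (n : ℕ) (a c : Fin (n + 1) → ℝ) (l : ℝ)
    (i : Fin (n + 1)) (t : ℝ) : ℝ :=
  c i * (l * (t - a 0)) ^ (l * (a i - a 0)) *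
    (l * (a (Fin.last n) - t)) ^ (l * (a (Fin.last n) - a i))

/-- The rational GT-Bernstein basis functions
`𝒯_{a_i}(t) = ω_{a_i} β_{a_i}(t) / Σ_j ω_{a_j} β_{a_j}(t)`. -/
noncomputable def ratGTBernstein (n : ℕ) (a c : Fin (n + 1) → ℝ) (l : ℝ)
    (ω : Fin (n + 1) → ℝ) (i : Fin (n + 1)) (t : ℝ) : ℝ :=
  ω i * gtBernstein n a c l i t / ∑ j, ω j * gtBernstein n a c l j t

open Finset

lemma det_submatrix_of_mul_mul {N M k : ℕ} (d : Fin N → ℝ) (e : Fin M → ℝ)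
    (A : Matrix (Fin N) (Fin M) ℝ) (r : Fin k → Fin N) (c : Fin k → Fin M) :
    ((Matrix.of fun i j => d i * e j * A i j).submatrix r c).det
      = (∏ i, d (r i)) * ((∏ i, e (c i)) * (A.submatrix r c).det) := by
  have hfactor : (Matrix.of fun i j => d i * e j * A i j).submatrix r c
      = Matrix.of fun i j =>
          d (r i) * (Matrix.of fun i j => e (c j) * A.submatrix r c i j) i j := by
    ext i j
    simp [mul_assoc]
  rw [hfactor, Matrix.det_mul_column, Matrix.det_mul_row]

theorem isTotallyPositive_of_mul_mul_iff {N M : ℕ} {d : Fin N → ℝ} {e : Fin M → ℝ}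
    (hd : ∀ i, 0 < d i) (he : ∀ j, 0 < e j) (A : Matrix (Fin N) (Fin M) ℝ) :
    IsTotallyPositive (Matrix.of fun i j => d i * e j * A i j) ↔ IsTotallyPositive A := by
  refine forall₅_congr fun k r c _ _ => ?_
  have hdr : 0 < ∏ i, d (r i) := prod_pos fun i _ => hd _
  have hec : 0 < ∏ i, e (c i) := prod_pos fun i _ => he _
  rw [det_submatrix_of_mul_mul, mul_nonneg_iff_of_pos_left hdr, mul_nonneg_iff_of_pos_left hec]

section GTBernstein

variable {n : ℕ} {a c : Fin (n + 1) → ℝ} {l t : ℝ}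

lemma gtBernstein_eq_mul_rpow_div (hl : 0 < l) (ht : t ∈ Set.Ioo (a 0) (a (Fin.last n)))
    (i : Fin (n + 1)) :
    gtBernstein n a c l i t
      = c i * (l * (a (Fin.last n) - t)) ^ (l * (a (Fin.last n) - a 0))
          * ((t - a 0) / (a (Fin.last n) - t)) ^ (l * (a i - a 0)) := by
  have hp : 0 < l * (t - a 0) := mul_pos hl (sub_pos.mpr ht.1)
  have hq : 0 < l * (a (Fin.last n) - t) := mul_pos hl (sub_pos.mpr ht.2)
  rw [gtBernstein, ← mul_div_mul_left (t - a 0) _ hl.ne', Real.div_rpow hp.le hq.le,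
    show l * (a (Fin.last n) - a i) = l * (a (Fin.last n) - a 0) - l * (a i - a 0) by ring,
    Real.rpow_sub hq]
  field_simp

lemma gtBernstein_pos (hc : ∀ i, 0 < c i) (hl : 0 < l)
    (ht : t ∈ Set.Ioo (a 0) (a (Fin.last n))) (i : Fin (n + 1)) :
    0 < gtBernstein n a c l i t := by
  have hq : 0 < l * (a (Fin.last n) - t) := mul_pos hl (sub_pos.mpr ht.2)
  have hx : 0 < (t - a 0) / (a (Fin.last n) - t) :=
    div_pos (sub_pos.mpr ht.1) (sub_pos.mpr ht.2)
  rw [gtBernstein_eq_mul_rpow_div hl ht]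
  exact mul_pos (mul_pos (hc i) (Real.rpow_pos_of_pos hq _)) (Real.rpow_pos_of_pos hx _)

lemma ratGTBernstein_eq_mul_mul_rpow_div {ω : Fin (n + 1) → ℝ} (hl : 0 < l)
    (ht : t ∈ Set.Ioo (a 0) (a (Fin.last n))) (i : Fin (n + 1)) :
    ratGTBernstein n a c l ω i t
      = (l * (a (Fin.last n) - t)) ^ (l * (a (Fin.last n) - a 0))
            / (∑ j, ω j * gtBernstein n a c l j t)
          * (ω i * c i) * ((t - a 0) / (a (Fin.last n) - t)) ^ (l * (a i - a 0)) := by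
  rw [ratGTBernstein, gtBernstein_eq_mul_rpow_div hl ht]
  ring

end GTBernstein

theorem ratGTBernstein_collocation_TP_iff_general
    (n : ℕ) (a c : Fin (n + 1) → ℝ) (l : ℝ) (ω : Fin (n + 1) → ℝ)
    (hc : ∀ i, 0 < c i) (hl : 0 < l) (hω : ∀ i, 0 < ω i)
    (t : Fin (n + 1) → ℝ) (ht : StrictMono t)
    (ht0 : a 0 < t 0) (htn : t (Fin.last n) < a (Fin.last n)) :
    IsTotallyPositive
        (Matrix.of fun i j : Fin (n + 1) => ratGTBernstein n a c l ω j (t i)) ↔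
      IsTotallyPositive
        (Matrix.of fun i j : Fin (n + 1) =>
          ((t i - a 0) / (a (Fin.last n) - t i)) ^ (l * (a j - a 0))) := by
  have ht_mem : ∀ i, t i ∈ Set.Ioo (a 0) (a (Fin.last n)) := fun i =>
    ⟨ht0.trans_le (ht.monotone (Fin.zero_le i)), (ht.monotone (Fin.le_last i)).trans_lt htn⟩
  have hrow : ∀ i, 0 < (l * (a (Fin.last n) - t i)) ^ (l * (a (Fin.last n) - a 0))
      / ∑ j, ω j * gtBernstein n a c l j (t i) := fun i =>
    div_pos (Real.rpow_pos_of_pos (mul_pos hl (sub_pos.mpr (ht_mem i).2)) _)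
      (sum_pos (fun j _ => mul_pos (hω j) (gtBernstein_pos hc hl (ht_mem i) j)) univ_nonempty)
  refine (Iff.of_eq ?_).trans
    (isTotallyPositive_of_mul_mul_iff hrow (fun j => mul_pos (hω j) (hc j)) _)
  congr 1
  ext i j
  exact ratGTBernstein_eq_mul_mul_rpow_div hl (ht_mem i) j

/-- For nodes `a 0 ≤ a 1 ≤ ⋯ ≤ a n` with `a 0 < a n`, coefficients
`c i > 0`, `l > 0`, weights `ω i > 0`, and an increasing sequence
`a 0 < t 0 < t 1 < ⋯ < t n < a n`, with `x i = (t i − a 0)/(a n − t i)` and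
`k i = a i − a 0`, the collocation matrix `C = [𝒯_{a_j}(t_i)]` is totally positive
if and only if `A = [x i ^ (l * k j)]` is totally positive. -/
theorem ratGTBernstein_collocation_TP_iff
    (n : ℕ) (a c : Fin (n + 1) → ℝ) (l : ℝ) (ω : Fin (n + 1) → ℝ)
    (ha : Monotone a) (ha' : a 0 < a (Fin.last n))
    (hc : ∀ i, 0 < c i) (hl : 0 < l) (hω : ∀ i, 0 < ω i)
    (t : Fin (n + 1) → ℝ) (ht : StrictMono t)
    (ht0 : a 0 < t 0) (htn : t (Fin.last n) < a (Fin.last n)) :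
    IsTotallyPositive
        (Matrix.of fun i j : Fin (n + 1) => ratGTBernstein n a c l ω j (t i)) ↔
      IsTotallyPositive
        (Matrix.of fun i j : Fin (n + 1) =>
          ((t i - a 0) / (a (Fin.last n) - t i)) ^ (l * (a j - a 0))) :=
  ratGTBernstein_collocation_TP_iff_general n a c l ω hc hl hω t ht ht0 htn
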